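/- Let X be an n-dimensional polyhedral real normed space (the unit ball is a polytope), and Y ⊆ X a k-dimensional subspace (1 ≤ k ≤ n−1). Suppose some minimal projection P_0 ∈ P_min(X,Y) has at most m norming pairs (x,f) ∈ ext B_X × ext B_{X*} with f(P_0(x)) = ‖P_0‖. Then the affine dimension of P_min(X,Y) is at least k(n−k) − m + 1. -/

import Mathlib

/-!
Since the unit balls of `X` and `X*` are polytopes, `‖Q‖` is the maximum of `f (Q x)` over the
finitely many extreme pairs `(x, f)`. Hence if `f (D x) ≤ r` on every norming pair of `P₀`, then
`‖P₀ + t • D‖ ≤ ‖P₀‖ + t * r` for small `t > 0`: the other pairs have slack. Let `D` range over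
the space of differences of projections onto `Y`, of dimension at least `k (n - k)`, and evaluate
it on the `N ≤ m` norming pairs. Minimality of `P₀` keeps the constant vector `-1` out of the
range of this evaluation map, so the range has dimension `< N`, while every `D` in its kernel moves
`P₀` inside `P_min(X, Y)`, so the kernel lies in the direction of its affine span.
Rank–nullity gives `k (n - k) ≤ dim ker + dim range ≤ adim P_min(X, Y) + m - 1`.
-/

open Metric Module

noncomputable section

variable {X : Type*} [NormedAddCommGroup X] [NormedSpace ℝ X]

def IsProjOnto (Y : Submodule ℝ X) (P : X →L[ℝ] X) : Prop :=
  (∀ x, P x ∈ Y) ∧ ∀ y ∈ Y, P y = y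

def relProjConst (Y : Submodule ℝ X) : ℝ :=
  sInf {c | ∃ P : X →L[ℝ] X, IsProjOnto Y P ∧ ‖P‖ = c}

def MinProjSet (Y : Submodule ℝ X) : Set (X →L[ℝ] X) :=
  {P | IsProjOnto Y P ∧ ‖P‖ = relProjConst Y}

def adim {M : Type*} [AddCommGroup M] [Module ℝ M] (S : Set M) : ℕ :=
  finrank ℝ (affineSpan ℝ S).direction

/-- A normed space is polyhedral if its closed unit ball is a convex polytope. -/
def IsPolyhedralSpace (X : Type*) [NormedAddCommGroup X] [NormedSpace ℝ X] : Prop :=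
  ∃ s : Finset X, closedBall (0 : X) 1 = convexHull ℝ (s : Set X)

open Filter Topology

lemma eventually_add_mul_lt {a c : ℝ} (h : a < c) (b : ℝ) :
    ∀ᶠ t in 𝓝 (0 : ℝ), a + t * b < c := by
  have : Tendsto (fun t : ℝ => a + t * b) (𝓝 0) (𝓝 a) :=
    (continuous_const.add (continuous_id.mul continuous_const)).tendsto' 0 a (by simp)
  exact this.eventually (eventually_lt_nhds h)

lemma mem_direction_affineSpan_of_add_smul_mem {V : Type*} [AddCommGroup V] [Module ℝ V]
    {S : Set V} {p v : V} {t : ℝ} (hp : p ∈ S) (hpv : p + t • v ∈ S) (ht : t ≠ 0) :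
    v ∈ (affineSpan ℝ S).direction := by
  have h := vsub_mem_vectorSpan ℝ hpv hp
  rw [vsub_eq_sub, add_sub_cancel_left] at h
  rwa [direction_affineSpan, ← Submodule.smul_mem_iff _ ht]

section Polyhedral

variable {E F : Type*} [NormedAddCommGroup E] [NormedSpace ℝ E]
  [NormedAddCommGroup F] [NormedSpace ℝ F]

lemma convexHull_extremePoints_of_finite {A : Set E} (hA : IsCompact A) (hAc : Convex ℝ A)
    (hfin : (A.extremePoints ℝ).Finite) : convexHull ℝ (A.extremePoints ℝ) = A := by
  rw [← (hfin.isCompact_convexHull ℝ).isClosed.closure_eq,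
    closure_convexHull_extremePoints hA hAc]

lemma mem_closedBall_dual_iff {s : Set E} (hs : closedBall (0 : E) 1 = convexHull ℝ s)
    {f : E →L[ℝ] ℝ} : f ∈ closedBall (0 : E →L[ℝ] ℝ) 1 ↔ ∀ x ∈ s, f x ≤ 1 := by
  constructor
  · intro hf x hx
    have hx1 : ‖x‖ ≤ 1 := mem_closedBall_zero_iff.1 (hs ▸ subset_convexHull ℝ s hx)
    exact (le_abs_self _).trans
      ((f.le_of_opNorm_le_of_le (mem_closedBall_zero_iff.1 hf) hx1).trans_eq (one_mul 1))
  · intro hf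
    have hball : ∀ x ∈ closedBall (0 : E) 1, f x ≤ 1 := by
      rw [hs]
      exact convexHull_min hf (convex_halfSpace_le f.toLinearMap.isLinear 1)
    refine mem_closedBall_zero_iff.2 (f.opNorm_le_of_unit_norm zero_le_one fun x hx => ?_)
    have h₁ := hball x (mem_closedBall_zero_iff.2 hx.le)
    have h₂ := hball (-x) (mem_closedBall_zero_iff.2 ((norm_neg x).trans hx).le)
    rw [map_neg] at h₂
    exact abs_le.2 ⟨by linarith, h₁⟩

/-- Otherwise some `D ≠ 0` vanishes on these vertices, and `f ± ε • D` stays in the dual ball. -/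
lemma span_setOf_apply_eq_one_eq_top [FiniteDimensional ℝ E] {s : Set E} (hsfin : s.Finite)
    (hs : closedBall (0 : E) 1 = convexHull ℝ s) {f : E →L[ℝ] ℝ}
    (hf : f ∈ (closedBall (0 : E →L[ℝ] ℝ) 1).extremePoints ℝ) :
    Submodule.span ℝ {x ∈ s | f x = 1} = ⊤ := by
  by_contra hspan
  obtain ⟨d, hd, hdspan⟩ :=
    Submodule.exists_dual_map_eq_bot_of_lt_top (lt_top_iff_ne_top.2 hspan) inferInstance
  set D : E →L[ℝ] ℝ := LinearMap.toContinuousLinearMap d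
  have hD : ∀ x ∈ s, f x = 1 → D x = 0 := fun x hx hfx =>
    LinearMap.le_ker_iff_map.2 hdspan (Submodule.subset_span ⟨hx, hfx⟩)
  have hnear : ∀ᶠ t in 𝓝 (0 : ℝ), f + t • D ∈ closedBall (0 : E →L[ℝ] ℝ) 1 := by
    simp only [mem_closedBall_dual_iff hs, add_apply, smul_apply, smul_eq_mul]
    refine (hsfin.eventually_all).2 fun x hx => ?_
    rcases (mem_closedBall_dual_iff hs).1 (extremePoints_subset hf) x hx |>.lt_or_eq with hlt | heq
    · exact (eventually_add_mul_lt hlt (D x)).mono fun t ht => ht.le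
    · exact Eventually.of_forall fun t => by simp [heq, hD x hx heq]
  have hneg : Tendsto (fun t : ℝ => -t) (𝓝 0) (𝓝 0) := by simpa using tendsto_neg (0 : ℝ)
  obtain ⟨ε, ⟨hplus, hminus⟩, hε⟩ := (((hnear.and (hneg.eventually hnear)).filter_mono
      nhdsWithin_le_nhds).and (self_mem_nhdsWithin (s := Set.Ioi 0))).exists
  have hmid : f ∈ openSegment ℝ (f + ε • D) (f + (-ε) • D) :=
    ⟨1 / 2, 1 / 2, by norm_num, by norm_num, by norm_num, by module⟩
  have hεD : ε • D = 0 := add_eq_left.1 (hf.2 hplus hminus hmid)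
  exact hd (LinearMap.toContinuousLinearMap.map_eq_zero_iff.1
    ((smul_eq_zero.1 hεD).resolve_left (ne_of_gt hε)))

namespace IsPolyhedralSpace

lemma finite_extremePoints (hE : IsPolyhedralSpace E) :
    ((closedBall (0 : E) 1).extremePoints ℝ).Finite := by
  obtain ⟨s, hs⟩ := hE
  exact s.finite_toSet.subset (hs ▸ extremePoints_convexHull_subset)

lemma convexHull_extremePoints (hE : IsPolyhedralSpace E) :
    convexHull ℝ ((closedBall (0 : E) 1).extremePoints ℝ) = closedBall (0 : E) 1 := by
  refine convexHull_extremePoints_of_finite ?_ (convex_closedBall _ _) hE.finite_extremePoints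
  obtain ⟨s, hs⟩ := hE
  exact hs ▸ s.finite_toSet.isCompact_convexHull ℝ

lemma finite_extremePoints_dual [FiniteDimensional ℝ E] (hE : IsPolyhedralSpace E) :
    ((closedBall (0 : E →L[ℝ] ℝ) 1).extremePoints ℝ).Finite := by
  obtain ⟨s, hs⟩ := hE
  let vertices : (E →L[ℝ] ℝ) → Set E := fun f => {x ∈ (s : Set E) | f x = 1}
  have hinj : Set.InjOn vertices ((closedBall (0 : E →L[ℝ] ℝ) 1).extremePoints ℝ) := by
    intro f hf g _ hfg
    refine ContinuousLinearMap.coe_injective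
      (LinearMap.ext_on (span_setOf_apply_eq_one_eq_top s.finite_toSet hs hf) fun x hx => ?_)
    have hxg : x ∈ vertices g := hfg ▸ hx
    simp only [ContinuousLinearMap.coe_coe, hx.2, hxg.2]
  refine Set.Finite.of_finite_image (s.finite_toSet.finite_subsets.subset ?_) hinj
  rintro _ ⟨f, -, rfl⟩
  exact Set.sep_subset _ _

lemma convexHull_extremePoints_dual [FiniteDimensional ℝ E] (hE : IsPolyhedralSpace E) :
    convexHull ℝ ((closedBall (0 : E →L[ℝ] ℝ) 1).extremePoints ℝ) =
      closedBall (0 : E →L[ℝ] ℝ) 1 :=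
  convexHull_extremePoints_of_finite (isCompact_closedBall _ _) (convex_closedBall _ _)
    hE.finite_extremePoints_dual

lemma norm_le_of_forall_extremePoints_dual [FiniteDimensional ℝ E] (hE : IsPolyhedralSpace E)
    {w : E} {c : ℝ} (h : ∀ f ∈ (closedBall (0 : E →L[ℝ] ℝ) 1).extremePoints ℝ, f w ≤ c) :
    ‖w‖ ≤ c := by
  obtain ⟨g, hg, hgw⟩ := exists_dual_vector'' ℝ w
  have hball : ∀ f ∈ closedBall (0 : E →L[ℝ] ℝ) 1, f w ≤ c := by
    rw [← hE.convexHull_extremePoints_dual]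
    exact convexHull_min h
      (convex_halfSpace_le (ContinuousLinearMap.apply ℝ ℝ w).toLinearMap.isLinear c)
  simpa [hgw] using hball g (mem_closedBall_zero_iff.2 hg)

end IsPolyhedralSpace

variable (E F) in
def extremePairs : Set (E × (F →L[ℝ] ℝ)) :=
  (closedBall (0 : E) 1).extremePoints ℝ ×ˢ (closedBall (0 : F →L[ℝ] ℝ) 1).extremePoints ℝ

def normingPairs (Q : E →L[ℝ] F) : Set (E × (F →L[ℝ] ℝ)) :=
  {p ∈ extremePairs E F | p.2 (Q p.1) = ‖Q‖}

def pairingEval (N : Finset (E × (F →L[ℝ] ℝ))) : (E →L[ℝ] F) →ₗ[ℝ] (N → ℝ) :=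
  LinearMap.pi fun p => (p.1.2.comp (ContinuousLinearMap.apply ℝ F p.1.1)).toLinearMap

lemma finite_extremePairs [FiniteDimensional ℝ F] (hE : IsPolyhedralSpace E)
    (hF : IsPolyhedralSpace F) : (extremePairs E F).Finite :=
  hE.finite_extremePoints.prod hF.finite_extremePoints_dual

lemma finite_normingPairs [FiniteDimensional ℝ F] (hE : IsPolyhedralSpace E)
    (hF : IsPolyhedralSpace F) (Q : E →L[ℝ] F) : (normingPairs Q).Finite :=
  (finite_extremePairs hE hF).subset (Set.sep_subset _ _)

lemma apply_le_opNorm_of_mem_extremePairs (Q : E →L[ℝ] F) {p : E × (F →L[ℝ] ℝ)}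
    (hp : p ∈ extremePairs E F) : p.2 (Q p.1) ≤ ‖Q‖ := by
  have hx : ‖p.1‖ ≤ 1 := mem_closedBall_zero_iff.1 (extremePoints_subset hp.1)
  have hf : ‖p.2‖ ≤ 1 := mem_closedBall_zero_iff.1 (extremePoints_subset hp.2)
  calc p.2 (Q p.1) ≤ ‖p.2 (Q p.1)‖ := le_abs_self _
    _ ≤ 1 * ‖Q p.1‖ := p.2.le_of_opNorm_le_of_le hf le_rfl
    _ ≤ ‖Q‖ := by simpa using Q.le_opNorm_of_le hx

lemma opNorm_le_of_forall_extremePairs [FiniteDimensional ℝ F] (hE : IsPolyhedralSpace E)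
    (hF : IsPolyhedralSpace F) {Q : E →L[ℝ] F} {c : ℝ}
    (h : ∀ p ∈ extremePairs E F, p.2 (Q p.1) ≤ c) : ‖Q‖ ≤ c := by
  have hball : closedBall (0 : E) 1 ⊆ Q ⁻¹' closedBall 0 c := by
    rw [← hE.convexHull_extremePoints]
    refine convexHull_min (fun x hx => mem_closedBall_zero_iff.2 ?_)
      ((convex_closedBall (0 : F) c).linear_preimage Q.toLinearMap)
    exact hF.norm_le_of_forall_extremePoints_dual fun f hf => h (x, f) ⟨hx, hf⟩
  have hc : 0 ≤ c := by simpa using hball (mem_closedBall_self zero_le_one)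
  exact Q.opNorm_le_of_unit_norm hc fun x hx =>
    mem_closedBall_zero_iff.1 (hball (mem_closedBall_zero_iff.2 hx.le))

lemma eventually_opNorm_add_smul_le [FiniteDimensional ℝ F] (hE : IsPolyhedralSpace E)
    (hF : IsPolyhedralSpace F) (Q D : E →L[ℝ] F) {r : ℝ}
    (h : ∀ p ∈ normingPairs Q, p.2 (D p.1) ≤ r) :
    ∀ᶠ t in 𝓝[>] (0 : ℝ), ‖Q + t • D‖ ≤ ‖Q‖ + t * r := by
  have hpair : ∀ p ∈ extremePairs E F,
      ∀ᶠ t in 𝓝[>] (0 : ℝ), p.2 (Q p.1) + t * p.2 (D p.1) ≤ ‖Q‖ + t * r := by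
    intro p hp
    rcases (apply_le_opNorm_of_mem_extremePairs Q hp).lt_or_eq with hlt | heq
    · refine ((eventually_add_mul_lt hlt (p.2 (D p.1) - r)).filter_mono
        nhdsWithin_le_nhds).mono fun t ht => ?_
      linarith
    · filter_upwards [self_mem_nhdsWithin] with t ht
      have := mul_le_mul_of_nonneg_left (h p ⟨hp, heq⟩) (le_of_lt ht)
      linarith
  filter_upwards [(finite_extremePairs hE hF).eventually_all.2 hpair] with t ht
  refine opNorm_le_of_forall_extremePairs hE hF fun p hp => ?_
  simpa using ht p hp

end Polyhedral

def projDirection (Y : Submodule ℝ X) : Submodule ℝ (X →L[ℝ] X) where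
  carrier := {D | (∀ x, D x ∈ Y) ∧ ∀ y ∈ Y, D y = 0}
  add_mem' ha hb := ⟨fun x => Y.add_mem (ha.1 x) (hb.1 x), fun y hy => by
    simp [ha.2 y hy, hb.2 y hy]⟩
  zero_mem' := ⟨fun _ => Y.zero_mem, fun _ _ => rfl⟩
  smul_mem' c _ ha := ⟨fun x => Y.smul_mem c (ha.1 x), fun y hy => by simp [ha.2 y hy]⟩

lemma IsProjOnto.add_smul {Y : Submodule ℝ X} {P D : X →L[ℝ] X} (hP : IsProjOnto Y P)
    (hD : D ∈ projDirection Y) (t : ℝ) : IsProjOnto Y (P + t • D) :=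
  ⟨fun x => Y.add_mem (hP.1 x) (Y.smul_mem t (hD.1 x)), fun y hy => by
    simp [hP.2 y hy, hD.2 y hy]⟩

lemma relProjConst_le_opNorm {Y : Submodule ℝ X} {P : X →L[ℝ] X} (hP : IsProjOnto Y P) :
    relProjConst Y ≤ ‖P‖ :=
  csInf_le ⟨0, by rintro _ ⟨Q, -, rfl⟩; exact norm_nonneg Q⟩ ⟨P, hP, rfl⟩

/-- `g ↦ g ∘ Y.mkQ` embeds `X ⧸ Y →ₗ[ℝ] Y` into `projDirection Y`. -/
lemma le_finrank_projDirection [FiniteDimensional ℝ X] (Y : Submodule ℝ X) :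
    finrank ℝ Y * (finrank ℝ X - finrank ℝ Y) ≤ finrank ℝ (projDirection Y) := by
  let lift : (X ⧸ Y →ₗ[ℝ] Y) →ₗ[ℝ] (X →L[ℝ] X) :=
    LinearMap.toContinuousLinearMap.toLinearMap ∘ₗ
      LinearMap.llcomp ℝ X Y X Y.subtype ∘ₗ LinearMap.lcomp ℝ Y Y.mkQ
  have hlift : ∀ g, lift g ∈ projDirection Y := fun g =>
    ⟨fun x => by simp [lift], fun y hy => by simp [lift, (Submodule.Quotient.mk_eq_zero Y).2 hy]⟩
  have hinj : Function.Injective (lift.codRestrict _ hlift) := by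
    intro g h hgh
    refine LinearMap.ext fun z => ?_
    obtain ⟨x, rfl⟩ := Y.mkQ_surjective z
    simpa [lift] using congrArg (fun D : projDirection Y => (D : X →L[ℝ] X) x) hgh
  have := LinearMap.finrank_le_finrank_of_injective hinj
  rw [finrank_linearMap] at this
  rwa [← Y.finrank_quotient_add_finrank, Nat.add_sub_cancel, Nat.mul_comm]

section MinimalProjection

variable [FiniteDimensional ℝ X] {Y : Submodule ℝ X} {P D : X →L[ℝ] X}

lemma nonneg_of_forall_normingPairs_apply_le (hX : IsPolyhedralSpace X)
    (hP : P ∈ MinProjSet Y) (hD : D ∈ projDirection Y) {r : ℝ}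
    (h : ∀ p ∈ normingPairs P, p.2 (D p.1) ≤ r) : 0 ≤ r := by
  by_contra hr
  obtain ⟨t, ht, htpos⟩ := ((eventually_opNorm_add_smul_le hX hX P D h).and
    self_mem_nhdsWithin).exists
  have hmin := relProjConst_le_opNorm (hP.1.add_smul hD t)
  have hdecrease := mul_neg_of_pos_of_neg (Set.mem_Ioi.1 htpos) (not_le.1 hr)
  linarith [hP.2]

lemma mem_direction_minProjSet (hX : IsPolyhedralSpace X) (hP : P ∈ MinProjSet Y)
    (hD : D ∈ projDirection Y) (h : ∀ p ∈ normingPairs P, p.2 (D p.1) ≤ 0) :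
    D ∈ (affineSpan ℝ (MinProjSet Y)).direction := by
  obtain ⟨t, ht, htpos⟩ := ((eventually_opNorm_add_smul_le hX hX P D h).and
    self_mem_nhdsWithin).exists
  have hproj := hP.1.add_smul hD t
  have hmin : P + t • D ∈ MinProjSet Y :=
    ⟨hproj, le_antisymm (by simpa [hP.2] using ht) (relProjConst_le_opNorm hproj)⟩
  exact mem_direction_affineSpan_of_add_smul_mem hP hmin (ne_of_gt htpos)

end MinimalProjection

theorem adim_minProjSet_ge_general [FiniteDimensional ℝ X] (hpoly : IsPolyhedralSpace X)
    {n k : ℕ} (hn : finrank ℝ X = n) (Y : Submodule ℝ X) (hk : finrank ℝ Y = k)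
    (P₀ : X →L[ℝ] X) (hP₀ : P₀ ∈ MinProjSet Y) (m : ℕ)
    (hm : ∀ s : Finset (X × (X →L[ℝ] ℝ)),
      (∀ p ∈ s, p.1 ∈ Set.extremePoints ℝ (closedBall (0 : X) 1) ∧
        p.2 ∈ Set.extremePoints ℝ (closedBall (0 : X →L[ℝ] ℝ) 1) ∧
        p.2 (P₀ p.1) = ‖P₀‖) → s.card ≤ m) :
    k * (n - k) + 1 ≤ adim (MinProjSet Y) + m := by
  set N := (finite_normingPairs hpoly hpoly P₀).toFinset
  have hN : ∀ p, p ∈ N ↔ p ∈ normingPairs P₀ := fun p => Set.Finite.mem_toFinset _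
  have hNm : N.card ≤ m := hm N fun p hp => by
    obtain ⟨⟨hx, hf⟩, hnorm⟩ := (hN p).1 hp
    exact ⟨hx, hf, hnorm⟩
  let Φ := pairingEval N ∘ₗ (projDirection Y).subtype
  have hrange : LinearMap.range Φ ≠ ⊤ := by
    intro htop
    obtain ⟨D, hD⟩ := htop.ge (Submodule.mem_top (x := fun _ => -1))
    refine absurd (nonneg_of_forall_normingPairs_apply_le hpoly hP₀ D.2 (r := -1) fun p hp =>
      (congrFun hD ⟨p, (hN p).2 hp⟩).le) (by norm_num)
  have hker : finrank ℝ (LinearMap.ker Φ) ≤ adim (MinProjSet Y) := by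
    rw [← Submodule.finrank_map_subtype_eq]
    refine Submodule.finrank_mono ?_
    rintro _ ⟨D, hD, rfl⟩
    exact mem_direction_minProjSet hpoly hP₀ D.2 fun p hp => (congrFun hD ⟨p, (hN p).2 hp⟩).le
  have hrank := Φ.finrank_range_add_finrank_ker
  have hcodim := Submodule.finrank_lt hrange
  rw [finrank_fintype_fun_eq_card, Fintype.card_coe] at hcodim
  have hdim := le_finrank_projDirection Y
  rw [hn, hk] at hdim
  omega

/-- In an `n`-dimensional polyhedral space, if some minimal projection `P₀` onto a
`k`-dimensional subspace `Y` has at most `m` norming pairs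
`(x, f) ∈ ext B_X × ext B_{X*}` (with `f (P₀ x) = ‖P₀‖`), then the affine dimension of
the set of minimal projections is at least `k(n-k) - m + 1`. -/
theorem adim_minProjSet_ge [FiniteDimensional ℝ X] (hpoly : IsPolyhedralSpace X)
    {n k : ℕ} (hn : finrank ℝ X = n) (Y : Submodule ℝ X) (hk : finrank ℝ Y = k)
    (hk1 : 1 ≤ k) (hkn : k ≤ n - 1)
    (P₀ : X →L[ℝ] X) (hP₀ : P₀ ∈ MinProjSet Y) (m : ℕ)
    (hm : ∀ s : Finset (X × (X →L[ℝ] ℝ)),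
      (∀ p ∈ s, p.1 ∈ Set.extremePoints ℝ (closedBall (0 : X) 1) ∧
        p.2 ∈ Set.extremePoints ℝ (closedBall (0 : X →L[ℝ] ℝ) 1) ∧
        p.2 (P₀ p.1) = ‖P₀‖) → s.card ≤ m) :
    k * (n - k) + 1 ≤ adim (MinProjSet Y) + m :=
  adim_minProjSet_ge_general hpoly hn Y hk P₀ hP₀ m hm
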